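/- For every p ∈ ℝ³ with p ≠ 0 there exists a unitary 16×16 complex matrix u(p) such that u(p) (M⁻·p) u(p)* is the block-diagonal matrix 2·diag(−|p|·𝟙₄, |p|·𝟙₄, 0₈), i.e. M⁻·p is unitarily similar to the diagonal matrix with eigenvalue −2|p| of multiplicity 4, eigenvalue 2|p| of multiplicity 4, and eigenvalue 0 of multiplicity 8. -/

import Mathlib

noncomputable section
open MeasureTheory Matrix Complex Filter Topology
open scoped Kronecker ENNReal InnerProductSpace RealInnerProductSpace

/-- Pauli matrices -/
def σ1 : Matrix (Fin 2) (Fin 2) ℂ := !![0, 1; 1, 0]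
def σ2 : Matrix (Fin 2) (Fin 2) ℂ := !![0, -I; I, 0]
def σ3 : Matrix (Fin 2) (Fin 2) ℂ := !![1, 0; 0, -1]

/-- Dirac alpha matrices in standard representation -/
def diracAlpha' (s : Matrix (Fin 2) (Fin 2) ℂ) : Matrix (Fin 4) (Fin 4) ℂ :=
  Matrix.reindex finSumFinEquiv finSumFinEquiv (Matrix.fromBlocks 0 s s 0)

def diracAlpha : Fin 3 → Matrix (Fin 4) (Fin 4) ℂ
  | 0 => diracAlpha' σ1
  | 1 => diracAlpha' σ2
  | 2 => diracAlpha' σ3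

def diracBeta : Matrix (Fin 4) (Fin 4) ℂ :=
  Matrix.reindex finSumFinEquiv finSumFinEquiv
    (Matrix.fromBlocks (1 : Matrix (Fin 2) (Fin 2) ℂ) 0 0 (-1 : Matrix (Fin 2) (Fin 2) ℂ))

abbrev R3 := EuclideanSpace ℝ (Fin 3)
abbrev C16 := EuclideanSpace ℂ (Fin 16)

/-- α·p -/
def alphaDot (p : R3) : Matrix (Fin 4) (Fin 4) ℂ :=
  ∑ j : Fin 3, (p j : ℂ) • diracAlpha j

/-- reindexing 4×4 Kronecker products to 16×16 matrices -/
def kron16 (A B : Matrix (Fin 4) (Fin 4) ℂ) : Matrix (Fin 16) (Fin 16) ℂ :=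
  Matrix.reindex finProdFinEquiv finProdFinEquiv (A ⊗ₖ B)

/-- M⁻·p -/
def Mminus (p : R3) : Matrix (Fin 16) (Fin 16) ℂ :=
  kron16 (alphaDot p) 1 - kron16 1 (alphaDot p)

/-- P·M⁺ -/
def MplusDot (P : R3) : Matrix (Fin 16) (Fin 16) ℂ :=
  (2⁻¹ : ℂ) • (kron16 (alphaDot P) 1 + kron16 1 (alphaDot P))

/-- τ(p) -/
def tau (p : R3) : Matrix (Fin 16) (Fin 16) ℂ :=
  -((‖p‖ ^ 2 : ℝ) : ℂ)⁻¹ • kron16 (alphaDot p) (alphaDot p)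

def Pplus (p : R3) : Matrix (Fin 16) (Fin 16) ℂ := (2⁻¹ : ℂ) • (1 + tau p)
def Pminus (p : R3) : Matrix (Fin 16) (Fin 16) ℂ := (2⁻¹ : ℂ) • (1 - tau p)

def Bmat : Matrix (Fin 16) (Fin 16) ℂ := (2 : ℂ) • kron16 diracBeta diracBeta

/-- the diagonal matrix `2 diag(−|p|·𝟙₄, |p|·𝟙₄, 0₈)` -/
def diagMminus (p : R3) : Matrix (Fin 16) (Fin 16) ℂ :=
  Matrix.diagonal fun i =>
    if (i : ℕ) < 4 then (↑(-(2 * ‖p‖)) : ℂ) else if (i : ℕ) < 8 then ((2 * ‖p‖ : ℝ) : ℂ) else 0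

/-! The matrix `M⁻·p` is Hermitian, so it is unitarily diagonalisable and it suffices to see that
its eigenvalues are a permutation of the diagonal of the target. The matrices `a = (α·p) ⊗ 1` and
`b = 1 ⊗ (α·p)` commute and both square to `|p|²`, hence `(a - b)³ = 4|p|² (a - b)` and every
eigenvalue lies in `{-2|p|, 0, 2|p|}`. On a three-point set the multiplicity of each value is, by
Lagrange interpolation, a fixed linear combination of the power sums of order `0, 1, 2`, which are
the traces of `1`, `M⁻·p` and `(M⁻·p)²`: `16`, `0` and `32|p|²`, as for the target. -/

open Finset

open Polynomial in
theorem card_filter_eq_of_sum_pow_eq {K ι : Type*} [Field K] [CharZero K] [DecidableEq K]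
    [Fintype ι] {s : Finset K} {e d : ι → K} (he : ∀ i, e i ∈ s) (hd : ∀ i, d i ∈ s)
    (hpow : ∀ k < #s, ∑ i, e i ^ k = ∑ i, d i ^ k) (y : K) :
    #{i | e i = y} = #{i | d i = y} := by
  obtain hι | hι := isEmpty_or_nonempty ι
  · simp [univ_eq_empty]
  set q := Lagrange.interpolate s id (fun x => if x = y then 1 else 0)
  have hq : ∀ x ∈ s, q.eval x = if x = y then 1 else 0 := fun x hx =>
    Lagrange.eval_interpolate_at_node _ (Set.injOn_id _) hx
  have hdeg : q.natDegree < #s := by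
    by_cases hq0 : q = 0
    · simpa [hq0] using card_pos.2 ⟨_, he hι.some⟩
    · exact (natDegree_lt_iff_degree_lt hq0).2 <|
        Lagrange.degree_interpolate_lt _ (Set.injOn_id _)
  have hcard : ∀ f : ι → K, (∀ i, f i ∈ s) →
      (#{i | f i = y} : K) = ∑ k ∈ range #s, q.coeff k * ∑ i, f i ^ k := by
    intro f hf
    rw [natCast_card_filter]
    simp_rw [← hq _ (hf _), eval_eq_sum_range' hdeg, mul_sum]
    exact sum_comm
  exact_mod_cast (hcard e he).trans <|
    (sum_congr rfl fun k hk => by rw [hpow k (mem_range.1 hk)]).trans (hcard d hd).symm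

theorem exists_equiv_comp_eq_of_card_filter_eq {ι α : Type*} [Fintype ι] [DecidableEq α]
    {f g : ι → α} (h : ∀ a, #{i | f i = a} = #{i | g i = a}) : ∃ σ : ι ≃ ι, f ∘ σ = g :=
  ⟨Equiv.ofFiberEquiv fun a => Fintype.equivOfCardEq <| by simp only [Fintype.card_subtype, h],
    funext <| Equiv.ofFiberEquiv_map _⟩

theorem Commute.sub_pow_three_eq_smul {S R : Type*} [CommRing S] [Ring R] [Algebra S R]
    {a b : R} (hab : Commute a b) {r : S} (ha : a * a = algebraMap S R r)
    (hb : b * b = algebraMap S R r) : (a - b) ^ 3 = (4 * r) • (a - b) := by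
  have hmul : ∀ {x y : R}, x * y = algebraMap S R r → ∀ z, z * (x * y) = r • z := fun h z => by
    rw [h, ← Algebra.commutes, Algebra.smul_def]
  have haab : a * (a * b) = r • b := by rw [← mul_assoc, ha, Algebra.smul_def]
  have hbba : b * (b * a) = r • a := by rw [← mul_assoc, hb, Algebra.smul_def]
  have haba : a * (b * a) = r • b := by rw [← hab.eq, haab]
  have hbab : b * (a * b) = r • a := by rw [hab.eq, hbba]
  simp only [pow_succ, pow_zero, one_mul, sub_mul, mul_sub, mul_assoc, hmul ha, hmul hb,
    haab, hbba, haba, hbab]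
  module

namespace Matrix

variable {n 𝕜 : Type*} [Fintype n] [DecidableEq n] [RCLike 𝕜] {A : Matrix n n 𝕜}

theorem trace_conjStarAlgAut (u : unitary (Matrix n n 𝕜)) (X : Matrix n n 𝕜) :
    (Unitary.conjStarAlgAut 𝕜 _ u X).trace = X.trace := by
  rw [Unitary.conjStarAlgAut_apply, trace_mul_cycle, Unitary.coe_star_mul_self, Matrix.one_mul]

namespace IsHermitian

theorem conjStarAlgAut_star_eigenvectorUnitary_pow (hA : A.IsHermitian) (k : ℕ) :
    Unitary.conjStarAlgAut 𝕜 _ (star hA.eigenvectorUnitary) (A ^ k) =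
      diagonal fun i => (hA.eigenvalues i : 𝕜) ^ k := by
  rw [map_pow, hA.conjStarAlgAut_star_eigenvectorUnitary, diagonal_pow]
  rfl

theorem sum_eigenvalues_pow_eq_re_trace (hA : A.IsHermitian) (k : ℕ) :
    ∑ i, hA.eigenvalues i ^ k = RCLike.re (A ^ k).trace := by
  rw [← trace_conjStarAlgAut (star hA.eigenvectorUnitary),
    hA.conjStarAlgAut_star_eigenvectorUnitary_pow, trace_diagonal, map_sum]
  simp only [← RCLike.ofReal_pow, RCLike.ofReal_re]

theorem eigenvalues_pow_eq_of_pow_eq_smul (hA : A.IsHermitian) {k : ℕ} {c : ℝ}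
    (h : A ^ k = (c : 𝕜) • A) (i : n) : hA.eigenvalues i ^ k = c * hA.eigenvalues i := by
  have := congr($(congrArg (Unitary.conjStarAlgAut 𝕜 _ (star hA.eigenvectorUnitary)) h) i i)
  rw [hA.conjStarAlgAut_star_eigenvectorUnitary_pow, map_smul,
    hA.conjStarAlgAut_star_eigenvectorUnitary] at this
  exact_mod_cast (by simpa using this :
    ((hA.eigenvalues i ^ k : ℝ) : 𝕜) = ((c * hA.eigenvalues i : ℝ) : 𝕜))

theorem exists_unitary_conj_eq_diagonal (hA : A.IsHermitian) {d : n → ℝ} (σ : Equiv.Perm n)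
    (hσ : hA.eigenvalues ∘ σ = d) :
    ∃ u ∈ unitaryGroup n 𝕜, u * A * uᴴ = diagonal fun i => (d i : 𝕜) := by
  set V : Matrix n n 𝕜 := (hA.eigenvectorUnitary : Matrix n n 𝕜)
  set P : Matrix n n 𝕜 := σ.permMatrix 𝕜
  have hP : P ∈ unitaryGroup n 𝕜 := by
    rw [mem_unitaryGroup_iff, star_eq_conjTranspose, conjTranspose_permMatrix, ← permMatrix_mul,
      inv_mul_cancel, permMatrix_one]
  have hV : V ∈ unitaryGroup n 𝕜 := hA.eigenvectorUnitary.2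
  refine ⟨P * star V, mul_mem hP (Unitary.star_mem hV), ?_⟩
  have hD : star V * A * V = diagonal (RCLike.ofReal ∘ hA.eigenvalues) := by
    simpa [Unitary.conjStarAlgAut_star_apply] using hA.conjStarAlgAut_star_eigenvectorUnitary
  calc P * star V * A * (P * star V)ᴴ = P * (star V * A * V) * Pᴴ := by
        simp only [← star_eq_conjTranspose, star_mul, star_star, Matrix.mul_assoc]
    _ = _ := by
      rw [hD, conjTranspose_permMatrix, PEquiv.toMatrix_toPEquiv_mul,
        PEquiv.mul_toMatrix_toPEquiv, submatrix_submatrix, Equiv.Perm.inv_def, Equiv.symm_symm,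
        Function.comp_id, Function.id_comp, submatrix_diagonal_equiv, ← hσ]
      rfl

end IsHermitian

end Matrix

theorem alphaDot_eq (p : R3) : alphaDot p =
    !![0, 0, (p 2 : ℂ), (p 0 : ℂ) - (p 1 : ℂ) * I;
       0, 0, (p 0 : ℂ) + (p 1 : ℂ) * I, -(p 2 : ℂ);
       (p 2 : ℂ), (p 0 : ℂ) - (p 1 : ℂ) * I, 0, 0;
       (p 0 : ℂ) + (p 1 : ℂ) * I, -(p 2 : ℂ), 0, 0] := by
  ext i j
  fin_cases i <;> fin_cases j <;>
    simp [alphaDot, diracAlpha, diracAlpha', σ1, σ2, σ3, Fin.sum_univ_three, finSumFinEquiv,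
      Fin.addCases, Fin.subNat, Fin.castLT] <;> ring

theorem alphaDot_isHermitian (p : R3) : (alphaDot p).IsHermitian := by
  rw [IsHermitian, alphaDot_eq]
  ext i j
  fin_cases i <;> fin_cases j <;> simp [Complex.ext_iff]

theorem alphaDot_mul_self (p : R3) : alphaDot p * alphaDot p = ((‖p‖ ^ 2 : ℝ) : ℂ) • 1 := by
  have hnorm : ((‖p‖ ^ 2 : ℝ) : ℂ) = (p 0 : ℂ) ^ 2 + (p 1 : ℂ) ^ 2 + (p 2 : ℂ) ^ 2 := by
    simp [EuclideanSpace.norm_sq_eq, Fin.sum_univ_three]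
  rw [alphaDot_eq, hnorm]
  ext i j
  fin_cases i <;> fin_cases j <;> simp [Matrix.mul_apply, Fin.sum_univ_four] <;> ring_nf <;>
    simp [I_sq]

theorem trace_alphaDot (p : R3) : (alphaDot p).trace = 0 := by
  simp [alphaDot_eq, Matrix.trace, Fin.sum_univ_four]

theorem kron16_mul (A B C D : Matrix (Fin 4) (Fin 4) ℂ) :
    kron16 A B * kron16 C D = kron16 (A * C) (B * D) := by
  simp only [kron16, reindex_apply, submatrix_mul_equiv, mul_kronecker_mul]

theorem kron16_one : kron16 1 1 = 1 := by
  simp only [kron16, one_kronecker_one, reindex_apply, submatrix_one_equiv]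

theorem kron16_smul_left (x : ℂ) (A B : Matrix (Fin 4) (Fin 4) ℂ) :
    kron16 (x • A) B = x • kron16 A B := by
  simp only [kron16, smul_kronecker, reindex_apply, submatrix_smul, Pi.smul_apply]

theorem kron16_smul_right (x : ℂ) (A B : Matrix (Fin 4) (Fin 4) ℂ) :
    kron16 A (x • B) = x • kron16 A B := by
  simp only [kron16, kronecker_smul, reindex_apply, submatrix_smul, Pi.smul_apply]

theorem conjTranspose_kron16 (A B : Matrix (Fin 4) (Fin 4) ℂ) :
    (kron16 A B)ᴴ = kron16 Aᴴ Bᴴ := by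
  simp only [kron16, conjTranspose_reindex, conjTranspose_kronecker]

theorem trace_kron16 (A B : Matrix (Fin 4) (Fin 4) ℂ) :
    (kron16 A B).trace = A.trace * B.trace := by
  rw [← trace_kronecker, kron16, reindex_apply, trace, trace]
  exact finProdFinEquiv.symm.sum_comp (fun x => (A ⊗ₖ B).diag x)

theorem Mminus_isHermitian (p : R3) : (Mminus p).IsHermitian := by
  simp only [IsHermitian, Mminus, conjTranspose_sub, conjTranspose_kron16,
    (alphaDot_isHermitian p).eq, conjTranspose_one]

theorem Mminus_pow_three (p : R3) : Mminus p ^ 3 = ((4 * ‖p‖ ^ 2 : ℝ) : ℂ) • Mminus p := by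
  have hcomm : Commute (kron16 (alphaDot p) 1) (kron16 1 (alphaDot p)) := by
    simp only [Commute, SemiconjBy, kron16_mul, one_mul, mul_one]
  rw [Mminus, hcomm.sub_pow_three_eq_smul (r := ((‖p‖ ^ 2 : ℝ) : ℂ))]
  · push_cast; rfl
  · rw [kron16_mul, alphaDot_mul_self, one_mul, kron16_smul_left, kron16_one,
      Algebra.algebraMap_eq_smul_one]
  · rw [kron16_mul, alphaDot_mul_self, one_mul, kron16_smul_right, kron16_one,
      Algebra.algebraMap_eq_smul_one]

theorem trace_Mminus (p : R3) : (Mminus p).trace = 0 := by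
  simp [Mminus, trace_kron16, trace_alphaDot]

theorem trace_Mminus_sq (p : R3) : (Mminus p ^ 2).trace = ((32 * ‖p‖ ^ 2 : ℝ) : ℂ) := by
  simp only [Mminus, sq, sub_mul, mul_sub, kron16_mul, one_mul, mul_one, alphaDot_mul_self,
    trace_sub, trace_kron16, trace_smul, trace_one, trace_alphaDot, Fintype.card_fin]
  push_cast
  ring

def mminusEigenvalues (p : R3) : Fin 16 → ℝ := fun i =>
  if (i : ℕ) < 4 then -(2 * ‖p‖) else if (i : ℕ) < 8 then 2 * ‖p‖ else 0

theorem diagMminus_eq_diagonal (p : R3) :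
    diagMminus p = diagonal fun i => (mminusEigenvalues p i : ℂ) := by
  unfold diagMminus mminusEigenvalues
  congr 1
  funext i
  split_ifs <;> simp

theorem mminusEigenvalues_mem (p : R3) (i : Fin 16) :
    mminusEigenvalues p i ∈ ({-(2 * ‖p‖), 0, 2 * ‖p‖} : Finset ℝ) := by
  unfold mminusEigenvalues
  split_ifs <;> simp

theorem eigenvalues_Mminus_mem (p : R3) (i : Fin 16) :
    (Mminus_isHermitian p).eigenvalues i ∈ ({-(2 * ‖p‖), 0, 2 * ‖p‖} : Finset ℝ) := by
  set x := (Mminus_isHermitian p).eigenvalues i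
  have h : x ^ 3 = 4 * ‖p‖ ^ 2 * x :=
    (Mminus_isHermitian p).eigenvalues_pow_eq_of_pow_eq_smul (Mminus_pow_three p) i
  have hx : (x + 2 * ‖p‖) * (x * (x - 2 * ‖p‖)) = 0 := by linear_combination h
  simp only [mem_insert, mem_singleton]
  rcases mul_eq_zero.1 hx with hx | hx
  · exact Or.inl (by linarith)
  rcases mul_eq_zero.1 hx with hx | hx
  · exact Or.inr (Or.inl hx)
  · exact Or.inr (Or.inr (by linarith))

theorem sum_eigenvalues_Mminus_pow (p : R3) {k : ℕ} (hk : k < 3) :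
    ∑ i, (Mminus_isHermitian p).eigenvalues i ^ k = ∑ i, mminusEigenvalues p i ^ k := by
  rw [(Mminus_isHermitian p).sum_eigenvalues_pow_eq_re_trace]
  interval_cases k
  · simp
  · simp [trace_Mminus, mminusEigenvalues, Fin.sum_univ_succ]
  · rw [trace_Mminus_sq, RCLike.re_to_complex, Complex.ofReal_re]
    simp [mminusEigenvalues, Fin.sum_univ_succ]
    ring

theorem stmt3_general (p : R3) :
    ∃ u ∈ Matrix.unitaryGroup (Fin 16) ℂ, u * Mminus p * uᴴ = diagMminus p := by
  obtain ⟨σ, hσ⟩ := exists_equiv_comp_eq_of_card_filter_eq <|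
    card_filter_eq_of_sum_pow_eq (eigenvalues_Mminus_mem p) (mminusEigenvalues_mem p)
      fun k hk => sum_eigenvalues_Mminus_pow p (hk.trans_le card_le_three)
  rw [diagMminus_eq_diagonal]
  exact (Mminus_isHermitian p).exists_unitary_conj_eq_diagonal σ hσ

/-- STATEMENT 3: for `p ≠ 0`, `M⁻·p` is unitarily similar to
`2 diag(−|p|·𝟙₄, |p|·𝟙₄, 0₈)`. -/
theorem stmt3 (p : R3) (hp : p ≠ 0) :
    ∃ u ∈ Matrix.unitaryGroup (Fin 16) ℂ, u * Mminus p * uᴴ = diagMminus p :=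
  stmt3_general p
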